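/- arXiv:1205.6402 — 2 statements merged into one kernel-verified Lean document; each statement's English description precedes it below -/
import Mathlib

section
/- The De Morgan axiom ¬◇A ⊃ □¬A fails in CPL: in the three-world example, the sequent Q[α] ⟹ (¬◇Q ⊃ □¬Q)[α] is NOT derivable in the CPL sequent calculus. -/
/-- Propositions of constructive provability logic over a type `Atom` of atomic
propositions: atoms `Q`, falsehood `⊥`, implication `A ⊃ B`, possibility `◇A`,
and necessity `□A`. -/
inductive Form (Atom : Type) : Type where
  | atom : Atom → Form Atom
  | bot  : Form Atom
  | imp  : Form Atom → Form Atom → Form Atom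
  | dia  : Form Atom → Form Atom
  | box  : Form Atom → Form Atom
  deriving DecidableEq

/-- `¬A` abbreviates `A ⊃ ⊥`. -/
def Form.neg {Atom : Type} (A : Form Atom) : Form Atom := Form.imp A Form.bot

/-- A context is a finite set of judgments `A[w]` pairing a proposition with a world. -/
abbrev Ctx (Atom W : Type) [DecidableEq Atom] [DecidableEq W] := Finset (Form Atom × W)

/-- CPL sequent calculus with sequents at a fixed world `w`, parameterized by an
oracle `O` giving derivability of sequents at the worlds accessible from `w`
(which, by converse well-foundedness of the accessibility relation, is defined
before derivability at `w`).  The rules are: init, ⊥L, ⊃R, ⊃L, ◇R, □R, ◇L, □L. -/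
inductive SeqInner {Atom W : Type} [DecidableEq Atom] [DecidableEq W]
    (acc : W → W → Prop) (w : W)
    (O : ∀ w', acc w w' → Ctx Atom W → Form Atom → Prop) :
    Ctx Atom W → Form Atom → Prop where
  | init (Γ : Ctx Atom W) (Q : Atom) :
      SeqInner acc w O (insert (.atom Q, w) Γ) (.atom Q)
  | botL (Γ : Ctx Atom W) (C : Form Atom) :
      (Form.bot, w) ∈ Γ → SeqInner acc w O Γ C
  | impR (Γ : Ctx Atom W) (A B : Form Atom) :
      SeqInner acc w O (insert (A, w) Γ) B → SeqInner acc w O Γ (.imp A B)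
  | impL (Γ : Ctx Atom W) (A B C : Form Atom) :
      (Form.imp A B, w) ∈ Γ → SeqInner acc w O Γ A →
      SeqInner acc w O (insert (B, w) Γ) C → SeqInner acc w O Γ C
  | diaR (Γ : Ctx Atom W) (A : Form Atom) (w' : W) (h : acc w w') :
      O w' h Γ A → SeqInner acc w O Γ (.dia A)
  | boxR (Γ : Ctx Atom W) (A : Form Atom) :
      (∀ w' (h : acc w w'), O w' h Γ A) → SeqInner acc w O Γ (.box A)
  | diaL (Γ : Ctx Atom W) (A C : Form Atom) :
      (Form.dia A, w) ∈ Γ →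
      (∀ w' (h : acc w w'), O w' h Γ A → SeqInner acc w O Γ C) →
      SeqInner acc w O Γ C
  | boxL (Γ : Ctx Atom W) (A C : Form Atom) :
      (Form.box A, w) ∈ Γ →
      ((∀ w' (h : acc w w'), O w' h Γ A) → SeqInner acc w O Γ C) →
      SeqInner acc w O Γ C

/-- The sequent calculus judgment `Γ ⟹ A[w]` of tethered constructive
provability logic CPL, defined one world at a time by well-founded recursion
on the converse well-founded accessibility relation `acc` (`≺`). -/
def SeqCPL {Atom W : Type} [DecidableEq Atom] [DecidableEq W]
    (acc : W → W → Prop) (hwf : WellFounded (Function.swap acc)) :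
    W → Ctx Atom W → Form Atom → Prop :=
  hwf.fix (C := fun _ => Ctx Atom W → Form Atom → Prop)
    (fun w rec => SeqInner acc w (fun w' h => rec w' h))

/-- The three worlds α, β, γ of the running example. -/
inductive W3 : Type where
  | α | β | γ
  deriving DecidableEq

/-- Accessibility given exactly by α ≺ β, α ≺ γ, and β ≺ γ. -/
def acc3 : W3 → W3 → Prop := fun a b =>
  (a = W3.α ∧ b = W3.β) ∨ (a = W3.α ∧ b = W3.γ) ∨ (a = W3.β ∧ b = W3.γ)

/-- `acc3` is converse well-founded. -/
theorem acc3_wf : WellFounded (Function.swap acc3) := by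
  have h : Subrelation (Function.swap acc3)
      (InvImage Nat.lt (fun x => match x with | .α => 2 | .β => 1 | .γ => 0)) := by
    intro a b hab
    rcases hab with ⟨h1, h2⟩ | ⟨h1, h2⟩ | ⟨h1, h2⟩ <;> subst h1 <;> subst h2 <;>
      simp [InvImage]
  exact Subrelation.wf h (InvImage.wf _ Nat.lt_wfRel.wf)

/-- Unfolding lemma for `SeqCPL`. -/
theorem seq_unfold {Atom W : Type} [DecidableEq Atom] [DecidableEq W]
    (acc : W → W → Prop) (hwf : WellFounded (Function.swap acc)) (w : W) :
    SeqCPL (Atom := Atom) acc hwf w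
      = SeqInner acc w (fun w' _ => SeqCPL acc hwf w') :=
  hwf.fix_eq _ w

/-- At world γ (and similarly useful at β), if every formula of `Γ` tagged with
the current world is an atom, then neither `⊥` nor a fresh atom is derivable. -/
theorem aux_gamma {Atom : Type} [DecidableEq Atom]
    (O : ∀ w', acc3 W3.γ w' → Ctx Atom W3 → Form Atom → Prop)
    {Γ : Ctx Atom W3} {C : Form Atom}
    (h : SeqInner acc3 W3.γ O Γ C)
    (hΓ : ∀ A, (A, W3.γ) ∈ Γ → ∃ q, A = Form.atom q) :
    (C = Form.bot → False) ∧
    (∀ q : Atom, C = Form.atom q → (Form.atom q, W3.γ) ∈ Γ) := by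
  cases h with
  | init Γ q =>
      refine ⟨nofun, fun q' hq => ?_⟩
      cases hq; exact Finset.mem_insert_self _ _
  | botL Γ C hmem =>
      rcases hΓ _ hmem with ⟨q, hq⟩; cases hq
  | impR Γ A B hp => exact ⟨nofun, nofun⟩
  | impL Γ A B C hmem h1 h2 =>
      rcases hΓ _ hmem with ⟨q, hq⟩; cases hq
  | diaR Γ A w' hw hO => exact ⟨nofun, nofun⟩
  | boxR Γ A hO => exact ⟨nofun, nofun⟩
  | diaL Γ A C hmem hk =>
      rcases hΓ _ hmem with ⟨q, hq⟩; cases hq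
  | boxL Γ A C hmem hk =>
      rcases hΓ _ hmem with ⟨q, hq⟩; cases hq

/-- At world β, if every formula of `Γ` tagged with β is an atom, then `⊥` is
not derivable, atoms are derivable only if present, and `¬q` is not derivable. -/
theorem aux_beta {Atom : Type} [DecidableEq Atom]
    (O : ∀ w', acc3 W3.β w' → Ctx Atom W3 → Form Atom → Prop)
    {Γ : Ctx Atom W3} {C : Form Atom}
    (h : SeqInner acc3 W3.β O Γ C) :
    (∀ A, (A, W3.β) ∈ Γ → ∃ q, A = Form.atom q) →
    (C = Form.bot → False) ∧
    (∀ q : Atom, C = Form.atom q → (Form.atom q, W3.β) ∈ Γ) ∧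
    (∀ q : Atom, C = Form.imp (Form.atom q) Form.bot → False) := by
  induction h with
  | init Γ q =>
      intro hΓ
      refine ⟨nofun, fun q' hq => ?_, nofun⟩
      cases hq; exact Finset.mem_insert_self _ _
  | botL Γ C hmem =>
      intro hΓ; rcases hΓ _ hmem with ⟨q, hq⟩; cases hq
  | impR Γ A B hp ih =>
      intro hΓ
      refine ⟨nofun, nofun, fun q hq => ?_⟩
      cases hq
      have hΓ' : ∀ A, (A, W3.β) ∈ insert (Form.atom q, W3.β) Γ →
          ∃ q', A = Form.atom q' := by
        intro A hA
        rcases Finset.mem_insert.mp hA with h | h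
        · exact ⟨q, (Prod.mk.injEq _ _ _ _ ▸ h).1⟩
        · exact hΓ _ h
      exact (ih hΓ').1 rfl
  | impL Γ A B C hmem h1 h2 ih1 ih2 =>
      intro hΓ; rcases hΓ _ hmem with ⟨q, hq⟩; cases hq
  | diaR Γ A w' hw hO =>
      intro hΓ
      exact ⟨nofun, nofun, nofun⟩
  | boxR Γ A hO =>
      intro hΓ
      exact ⟨nofun, nofun, nofun⟩
  | diaL Γ A C hmem hk ih =>
      intro hΓ; rcases hΓ _ hmem with ⟨q, hq⟩; cases hq
  | boxL Γ A C hmem hk ih =>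
      intro hΓ; rcases hΓ _ hmem with ⟨q, hq⟩; cases hq

/-- The key invariant at world α. -/
theorem aux_alpha {Atom : Type} [DecidableEq Atom] (Q : Atom)
    {Γ : Ctx Atom W3} {C : Form Atom}
    (h : SeqInner acc3 W3.α (fun w' _ => SeqCPL acc3 acc3_wf w') Γ C) :
    (∀ p ∈ Γ, p = (Form.neg (Form.dia (Form.atom Q)), W3.α) ∨
              p = (Form.atom Q, W3.α)) →
    (C = Form.dia (Form.atom Q) → False) ∧
    (C = Form.box (Form.neg (Form.atom Q)) → False) ∧
    (C = Form.imp (Form.neg (Form.dia (Form.atom Q)))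
          (Form.box (Form.neg (Form.atom Q))) → False) := by
  induction h with
  | init Γ q =>
      intro hΓ
      exact ⟨nofun, nofun, nofun⟩
  | botL Γ C hmem =>
      intro hΓ
      rcases hΓ _ hmem with h | h <;> simp [Form.neg, Prod.ext_iff] at h
  | impR Γ A B hp ih =>
      intro hΓ
      refine ⟨nofun, nofun, fun h => ?_⟩
      cases h
      have hΓ' : ∀ p ∈ insert (Form.neg (Form.dia (Form.atom Q)), W3.α) Γ,
          p = (Form.neg (Form.dia (Form.atom Q)), W3.α) ∨
          p = (Form.atom Q, W3.α) := by
        intro p hp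
        rcases Finset.mem_insert.mp hp with h | h
        · exact Or.inl h
        · exact hΓ _ h
      exact (ih hΓ').2.1 rfl
  | impL Γ A B C hmem h1 h2 ih1 ih2 =>
      intro hΓ
      rcases hΓ _ hmem with h | h
      · have hA : A = Form.dia (Form.atom Q) ∧ B = Form.bot := by
          have := (Prod.mk.injEq _ _ _ _ ▸ h).1
          simp only [Form.neg] at this
          cases this; exact ⟨rfl, rfl⟩
        exact absurd ((ih1 hΓ).1 hA.1) not_false
      · simp [Prod.ext_iff] at h
  | diaR Γ A w' hw hO =>
      intro hΓ
      refine ⟨fun h => ?_, nofun, nofun⟩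
      cases h
      have hnoβγ : ∀ w'', w'' ≠ W3.α → ∀ A : Form Atom, (A, w'') ∈ Γ →
          ∃ q, A = Form.atom q := by
        intro w'' hne A hA
        rcases hΓ _ hA with h | h <;>
          · exfalso; apply hne; exact (Prod.mk.injEq _ _ _ _ ▸ h).2
      rcases hw with ⟨h1, h2⟩ | ⟨h1, h2⟩ | ⟨h1, h2⟩
      · subst h2
        rw [seq_unfold] at hO
        have := (aux_beta _ hO (hnoβγ _ (by simp))).2.1 Q rfl
        rcases hnoβγ _ (by simp) _ this with ⟨q, hq⟩
        rcases hΓ _ this with h | h <;> simp [Form.neg, Prod.ext_iff] at h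
      · subst h2
        rw [seq_unfold] at hO
        have := (aux_gamma _ hO (hnoβγ _ (by simp))).2 Q rfl
        rcases hΓ _ this with h | h <;> simp [Form.neg, Prod.ext_iff] at h
      · cases h1
  | boxR Γ A hO =>
      intro hΓ
      refine ⟨nofun, fun h => ?_, nofun⟩
      cases h
      have hacc : acc3 W3.α W3.β := Or.inl ⟨rfl, rfl⟩
      have hβ := hO W3.β hacc
      rw [seq_unfold] at hβ
      have hnoβ : ∀ A : Form Atom, (A, W3.β) ∈ Γ → ∃ q, A = Form.atom q := by
        intro A hA
        rcases hΓ _ hA with h | h <;> simp [Form.neg, Prod.ext_iff] at h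
      exact (aux_beta _ hβ hnoβ).2.2 Q rfl
  | diaL Γ A C hmem hk ih =>
      intro hΓ
      rcases hΓ _ hmem with h | h <;> simp [Form.neg, Prod.ext_iff] at h
  | boxL Γ A C hmem hk ih =>
      intro hΓ
      rcases hΓ _ hmem with h | h <;> simp [Form.neg, Prod.ext_iff] at h

/-- The De Morgan axiom `¬◇A ⊃ □¬A` fails in CPL: in the three-world example,
the sequent `Q[α] ⟹ (¬◇Q ⊃ □¬Q)[α]` is NOT derivable in the CPL sequent
calculus. -/
theorem cpl_de_morgan_fails {Atom : Type} [DecidableEq Atom] (Q : Atom) :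
    ¬ SeqCPL acc3 acc3_wf W3.α ({(Form.atom Q, W3.α)} : Ctx Atom W3)
        (Form.imp (Form.neg (Form.dia (Form.atom Q)))
          (Form.box (Form.neg (Form.atom Q)))) := by
  intro h
  rw [seq_unfold] at h
  have hΓ : ∀ p ∈ ({(Form.atom Q, W3.α)} : Ctx Atom W3),
      p = (Form.neg (Form.dia (Form.atom Q)), W3.α) ∨
      p = (Form.atom Q, W3.α) := by
    intro p hp
    exact Or.inr (Finset.mem_singleton.mp hp)
  exact (aux_alpha Q h hΓ).2.2 rfl
end

section
/- Axiom 4□ is valid in CPL under transitivity: if the converse well-founded accessibility relation ≺ is moreover transitive, then for every context Γ, every world w, and every proposition A, Γ ⊢ (□A ⊃ □□A)[w] in the CPL natural deduction system. -/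
/-- CPL natural deduction with conclusions at a fixed world `w`, parameterized by
an oracle `O` giving provability at the worlds accessible from `w` (which, by
converse well-foundedness of the accessibility relation, is defined before
provability at `w`).  The rules are: hyp, ⊥E, ⊃I, ⊃E, ◇I, □I, ◇E, □E. -/
inductive NDInner {Atom W : Type} [DecidableEq Atom] [DecidableEq W]
    (acc : W → W → Prop) (w : W)
    (O : ∀ w', acc w w' → Ctx Atom W → Form Atom → Prop) :
    Ctx Atom W → Form Atom → Prop where
  | hyp (Γ : Ctx Atom W) (A : Form Atom) :
      NDInner acc w O (insert (A, w) Γ) A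
  | botE (Γ : Ctx Atom W) (C : Form Atom) :
      NDInner acc w O Γ .bot → NDInner acc w O Γ C
  | impI (Γ : Ctx Atom W) (A B : Form Atom) :
      NDInner acc w O (insert (A, w) Γ) B → NDInner acc w O Γ (.imp A B)
  | impE (Γ : Ctx Atom W) (A B : Form Atom) :
      NDInner acc w O Γ (.imp A B) → NDInner acc w O Γ A → NDInner acc w O Γ B
  | diaI (Γ : Ctx Atom W) (A : Form Atom) (w' : W) (h : acc w w') :
      O w' h Γ A → NDInner acc w O Γ (.dia A)
  | boxI (Γ : Ctx Atom W) (A : Form Atom) :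
      (∀ w' (h : acc w w'), O w' h Γ A) → NDInner acc w O Γ (.box A)
  | diaE (Γ : Ctx Atom W) (A C : Form Atom) :
      NDInner acc w O Γ (.dia A) →
      (∀ w' (h : acc w w'), O w' h Γ A → NDInner acc w O Γ C) →
      NDInner acc w O Γ C
  | boxE (Γ : Ctx Atom W) (A C : Form Atom) :
      NDInner acc w O Γ (.box A) →
      ((∀ w' (h : acc w w'), O w' h Γ A) → NDInner acc w O Γ C) →
      NDInner acc w O Γ C

/-- The natural deduction judgment `Γ ⊢ A[w]` of tethered constructive
provability logic CPL, defined one world at a time by well-founded recursion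
on the converse well-founded accessibility relation `acc` (`≺`). -/
def NDCPL {Atom W : Type} [DecidableEq Atom] [DecidableEq W]
    (acc : W → W → Prop) (hwf : WellFounded (Function.swap acc)) :
    W → Ctx Atom W → Form Atom → Prop :=
  hwf.fix (C := fun _ => Ctx Atom W → Form Atom → Prop)
    (fun w rec => NDInner acc w (fun w' h => rec w' h))

theorem NDCPL_eq {Atom W : Type} [DecidableEq Atom] [DecidableEq W]
    (acc : W → W → Prop) (hwf : WellFounded (Function.swap acc)) (w : W) :
    NDCPL (Atom := Atom) acc hwf w
      = NDInner acc w (fun w' _ => NDCPL acc hwf w') := by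
  unfold NDCPL
  exact hwf.fix_eq _ w

/-- Axiom 4□ is valid in CPL under transitivity: if the converse well-founded
accessibility relation is moreover transitive, then `Γ ⊢ (□A ⊃ □□A)[w]`. -/
theorem cpl_axiom_four_box {Atom W : Type} [DecidableEq Atom] [DecidableEq W]
    (acc : W → W → Prop) (hwf : WellFounded (Function.swap acc))
    (htrans : ∀ a b c : W, acc a b → acc b c → acc a c)
    (Γ : Ctx Atom W) (w : W) (A : Form Atom) :
    NDCPL acc hwf w Γ
      (Form.imp (Form.box A) (Form.box (Form.box A))) := by
  rw [NDCPL_eq]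
  apply NDInner.impI
  apply NDInner.boxE _ A
  · exact NDInner.hyp _ _
  · intro hAll
    apply NDInner.boxI
    intro w' h
    rw [NDCPL_eq]
    apply NDInner.boxI
    intro w'' h''
    exact hAll w'' (htrans _ _ _ h h'')
end
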